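/- If ψ is a reflexive weakly left invariant fuzzy relation on a fuzzy automaton A, then for every word u = x₁...xₙ we have σ ∘ ψ ∘ δ_{xₙ} ∘ ψ ∘ ... ∘ δ_{x₁} ∘ ψ = σ_{xₙ...x₁}, i.e. inserting ψ between all transition relations starting from σ does not change the result. -/
import Mathlib


namespace FuzzyAut

/-- Composition of fuzzy relations. -/
def rcomp {L : Type*} [CompleteLattice L] [CommMonoid L] {A B C : Type*}
    (α : A → B → L) (β : B → C → L) : A → C → L :=
  fun a c => ⨆ b, α a b * β b c

/-- Composition of a fuzzy set with a fuzzy relation. -/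
def scomp {L : Type*} [CompleteLattice L] [CommMonoid L] {A B : Type*}
    (f : A → L) (α : A → B → L) : B → L :=
  fun b => ⨆ a, f a * α a b

/-- Composition of a fuzzy relation with a fuzzy set. -/
def rscomp {L : Type*} [CompleteLattice L] [CommMonoid L] {A B : Type*}
    (α : A → B → L) (g : B → L) : A → L :=
  fun a => ⨆ b, α a b * g b

/-- Scalar composition of two fuzzy sets. -/
def sscomp {L : Type*} [CompleteLattice L] [CommMonoid L] {A : Type*}
    (f g : A → L) : L := ⨆ a, f a * g a

/-- The crisp equality fuzzy relation. -/
def eqRel {L : Type*} [CompleteLattice L] [CommMonoid L] (A : Type*) : A → A → L :=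
  fun a b => ⨆ _ : a = b, (1 : L)

/-- The fuzzy transition relation extended to words. -/
def relWord {L : Type*} [CompleteLattice L] [CommMonoid L] {A X : Type*}
    (δ : X → A → A → L) : List X → A → A → L
  | [] => eqRel A
  | x :: u => rcomp (δ x) (relWord δ u)

/-- The family φ_u : φ_ε = σ∘φ, φ_{ux} = φ_u∘δ_x∘φ. -/
def phiFam {L : Type*} [CompleteLattice L] [CommMonoid L] {A X : Type*}
    (σ : A → L) (δ : X → A → A → L) (φ : A → A → L) (u : List X) : A → L :=
  u.foldl (fun f x => scomp (scomp f (δ x)) φ) (scomp σ φ)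

/-- The family ψ^u : ψ^ε = ψ∘τ, ψ^{xu} = ψ∘δ_x∘ψ^u. -/
def psiFam {L : Type*} [CompleteLattice L] [CommMonoid L] {A X : Type*}
    (τ : A → L) (δ : X → A → A → L) (ψ : A → A → L) : List X → A → L
  | [] => rscomp ψ τ
  | x :: u => rscomp ψ (rscomp (δ x) (psiFam τ δ ψ u))

/-- Reflexivity of a fuzzy relation. -/
def IsRefl {L : Type*} [CompleteLattice L] [CommMonoid L] {A : Type*}
    (φ : A → A → L) : Prop := ∀ a, φ a a = 1

/-- Transitivity of a fuzzy relation. -/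
def IsTrans {L : Type*} [CompleteLattice L] [CommMonoid L] {A : Type*}
    (φ : A → A → L) : Prop := ∀ a b c, φ a b * φ b c ≤ φ a c

section Aux

variable {L : Type*} [CompleteLattice L] [CommMonoid L]
variable (res : L → L → L) (hres : ∀ x y z : L, x * y ≤ z ↔ x ≤ res y z)

include hres

lemma mul_mono_left' {a b : L} (c : L) (h : a ≤ b) : a * c ≤ b * c :=
  (hres a c (b * c)).mpr (le_trans h ((hres b c (b * c)).mp le_rfl))

lemma mul_mono_right' {a b : L} (c : L) (h : a ≤ b) : c * a ≤ c * b := by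
  rw [mul_comm c a, mul_comm c b]; exact mul_mono_left' res hres c h

lemma iSup_mul' {ι : Sort*} (f : ι → L) (y : L) : (⨆ i, f i) * y = ⨆ i, f i * y :=
  le_antisymm
    ((hres _ _ _).mpr (iSup_le fun i => (hres _ _ _).mp (le_iSup (fun i => f i * y) i)))
    (iSup_le fun i => mul_mono_left' res hres y (le_iSup f i))

lemma mul_iSup' {ι : Sort*} (f : ι → L) (y : L) : y * (⨆ i, f i) = ⨆ i, y * f i := by
  rw [mul_comm, iSup_mul' res hres]
  exact iSup_congr fun i => mul_comm _ _

lemma bot_mul' (y : L) : (⊥ : L) * y = ⊥ :=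
  le_bot_iff.mp ((hres _ _ _).mpr bot_le)

lemma mul_bot' (y : L) : y * (⊥ : L) = ⊥ := by
  rw [mul_comm]; exact bot_mul' res hres y

lemma scomp_eqRel' {A : Type*} (f : A → L) : scomp f (eqRel A) = f := by
  funext b
  apply le_antisymm
  · refine iSup_le fun a => ?_
    by_cases h : a = b
    · subst h
      simp [eqRel, iSup_pos, mul_one]
    · simp [eqRel, h, mul_bot' res hres]
  · have := le_iSup (fun a => f a * eqRel A a b) b
    simpa [eqRel, scomp, iSup_pos, mul_one] using this

lemma scomp_rcomp' {A B C : Type*} (f : A → L) (α : A → B → L) (β : B → C → L) :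
    scomp (scomp f α) β = scomp f (rcomp α β) := by
  funext c
  simp only [scomp, rcomp]
  rw [show (⨆ b, (⨆ a, f a * α a b) * β b c) = ⨆ b, ⨆ a, (f a * α a b) * β b c from
    iSup_congr fun b => iSup_mul' res hres _ _]
  rw [iSup_comm]
  refine iSup_congr fun a => ?_
  rw [mul_iSup' res hres]
  exact iSup_congr fun b => (mul_assoc _ _ _)

lemma rcomp_assoc' {A B C D : Type*} (α : A → B → L) (β : B → C → L) (γ : C → D → L) :
    rcomp (rcomp α β) γ = rcomp α (rcomp β γ) := by
  funext a d
  simp only [rcomp]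
  rw [show (⨆ c, (⨆ b, α a b * β b c) * γ c d) = ⨆ c, ⨆ b, (α a b * β b c) * γ c d from
    iSup_congr fun c => iSup_mul' res hres _ _]
  rw [iSup_comm]
  refine iSup_congr fun b => ?_
  rw [mul_iSup' res hres]
  exact iSup_congr fun c => (mul_assoc _ _ _)

lemma rcomp_eqRel' {A B : Type*} (α : A → B → L) : rcomp α (eqRel B) = α := by
  funext a b
  exact congrFun (scomp_eqRel' res hres (α a)) b

lemma eqRel_rcomp' {A B : Type*} (α : A → B → L) : rcomp (eqRel A) α = α := by
  funext a b
  apply le_antisymm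
  · refine iSup_le fun c => ?_
    by_cases h : a = c
    · subst h; simp [eqRel, iSup_pos, one_mul]
    · simp [eqRel, h, bot_mul' res hres]
  · have := le_iSup (fun c => eqRel A a c * α c b) a
    simpa [eqRel, rcomp, iSup_pos, one_mul] using this

lemma relWord_append' {A X : Type*} (δ : X → A → A → L) (u : List X) (x : X) :
    relWord δ (u ++ [x]) = rcomp (relWord δ u) (δ x) := by
  induction u with
  | nil =>
      simp only [List.nil_append, relWord, rcomp_eqRel' res hres, eqRel_rcomp' res hres]
  | cons y u ih =>
      show rcomp (δ y) (relWord δ (u ++ [x])) = _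
      rw [ih, relWord, rcomp_assoc' res hres]

end Aux

/-- for a reflexive weakly left invariant fuzzy relation ψ,
inserting ψ between σ and all the transition relations does not change the
result: σ∘ψ∘δ_{y₁}∘ψ∘⋯∘δ_{y_k}∘ψ = σ_{y₁⋯y_k} for every word. -/
theorem stmt15 {L : Type*} [CompleteLattice L] [CommMonoid L] (res : L → L → L) (hres : ∀ x y z : L, x * y ≤ z ↔ x ≤ res y z) (htop : ∀ x : L, x ≤ 1)
    {A X : Type*} (σ : A → L) (δ : X → A → A → L) (τ : A → L)
    (ψ : A → A → L) (hrefl : IsRefl ψ)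
    (hwli : ∀ u : List X, scomp (scomp σ (relWord δ u)) ψ ≤ scomp σ (relWord δ u)) :
    ∀ w : List X, phiFam σ δ ψ w = scomp σ (relWord δ w) := by
  have hge : ∀ f : A → L, f ≤ scomp f ψ := by
    intro f b
    have := le_iSup (fun a => f a * ψ a b) b
    simpa [hrefl b, mul_one, scomp] using this
  have hfix : ∀ u : List X, scomp (scomp σ (relWord δ u)) ψ = scomp σ (relWord δ u) :=
    fun u => le_antisymm (hwli u) (hge _)
  intro w
  induction w using List.reverseRecOn with
  | nil =>
      have : phiFam σ δ ψ ([] : List X) = scomp σ ψ := rfl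
      rw [this]
      have h0 := hfix []
      simp only [relWord, scomp_eqRel' res hres] at h0 ⊢
      exact h0
  | append_singleton u x ih =>
      have hstep : phiFam σ δ ψ (u ++ [x]) = scomp (scomp (phiFam σ δ ψ u) (δ x)) ψ := by
        simp [phiFam, List.foldl_append]
      rw [hstep, ih, ← hfix (u ++ [x]), relWord_append' res hres, ← scomp_rcomp' res hres]
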